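/- Let A be a Hermitian n×n complex matrix. Then for every index j, s_j(A⁺) ≤ s_j( |A| ⊕ (|A| − A)/2 ), where the right-hand matrix is the 2n×2n block diagonal matrix with diagonal blocks |A| and (|A| − A)/2. -/

import Mathlib

open Matrix
open scoped ComplexOrder

/-- `singularValues X j` is the `(j+1)`-th largest singular value of `X`, i.e. the
decreasingly ordered square roots of the eigenvalues of `Xᴴ * X`. -/
noncomputable def singularValues {m : ℕ} (X : Matrix (Fin m) (Fin m) ℂ) : Fin m → ℝ :=
  fun j => Real.sqrt
    ((Matrix.isHermitian_conjTranspose_mul_self X).eigenvalues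
      (Tuple.sort (Matrix.isHermitian_conjTranspose_mul_self X).eigenvalues j.rev))

/-- `matAbs X = |X|` is the positive semidefinite square root of `Xᴴ * X`. -/
noncomputable def matAbs {m : ℕ} (X : Matrix (Fin m) (Fin m) ℂ) : Matrix (Fin m) (Fin m) ℂ :=
  (Matrix.posSemidef_conjTranspose_mul_self X).1.eigenvectorUnitary.1 *
    Matrix.diagonal ((↑) ∘ Real.sqrt ∘ (Matrix.posSemidef_conjTranspose_mul_self X).1.eigenvalues) *
    (star (Matrix.posSemidef_conjTranspose_mul_self X).1.eigenvectorUnitary : Matrix (Fin m) (Fin m) ℂ)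

/-- `dsum X Y = X ⊕ Y` is the block diagonal matrix with diagonal blocks `X` and `Y`. -/
noncomputable def dsum {m : ℕ} (X Y : Matrix (Fin m) (Fin m) ℂ) :
    Matrix (Fin (m + m)) (Fin (m + m)) ℂ :=
  Matrix.reindex finSumFinEquiv finSumFinEquiv (Matrix.fromBlocks X 0 0 Y)

/-- `matPosPart X = X⁺ = (|X| + X)/2`. -/
noncomputable def matPosPart {m : ℕ} (X : Matrix (Fin m) (Fin m) ℂ) : Matrix (Fin m) (Fin m) ℂ :=
  (2 : ℂ)⁻¹ • (matAbs X + X)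

/-- `matNegPart X = X⁻ = (|X| - X)/2`. -/
noncomputable def matNegPart {m : ℕ} (X : Matrix (Fin m) (Fin m) ℂ) : Matrix (Fin m) (Fin m) ℂ :=
  (2 : ℂ)⁻¹ • (matAbs X - X)

/-! `A⁺` and `|A|` are functions of `A` in the continuous functional calculus, so with `λ` the
eigenvalues of `A`, the squared singular values of `A⁺` are the `(λᵢ⁺)²`, and those of
`M = |A| ⊕ Y` are the `λᵢ²` together with the eigenvalues of `YᴴY`. Since `(λ⁺)² ≤ λ²`, above
every threshold `c` there are at most as many of the former as of the latter, and such counts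
compare decreasingly sorted sequences termwise. -/

open Finset Polynomial

namespace Tuple

variable {α : Type*} [LinearOrder α]

theorem lt_apply_sort_rev_iff {m : ℕ} (f : Fin m → α) (j : Fin m) (c : α) :
    c < f (sort f j.rev) ↔ (j : ℕ) < (univ.val.map f).countP (c < ·) := by
  have hsorted : (j.rev : ℕ) < #{i | f (sort f i) ≤ c} ↔ f (sort f j.rev) ≤ c :=
    lt_card_le_iff_apply_le_of_monotone (monotone_sort f)
  have hperm : #{i | f (sort f i) ≤ c} = #{i | f i ≤ c} := card_equiv (sort f) (by simp)
  have hcompl : #{i | f i ≤ c} + #{i | c < f i} = m := by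
    simpa [not_le] using card_filter_add_card_filter_not (s := univ) (fun i => f i ≤ c)
  rw [Multiset.countP_map, ← not_le, ← hsorted, hperm, Fin.val_rev]
  change _ ↔ _ < #{i | c < f i}
  omega

theorem apply_sort_rev_le_of_countP_le {m k : ℕ} (f : Fin m → α) (g : Fin k → α)
    {j : Fin m} {j' : Fin k} (hj : (j : ℕ) = j')
    (h : ∀ c, (univ.val.map f).countP (c < ·) ≤ (univ.val.map g).countP (c < ·)) :
    f (sort f j.rev) ≤ g (sort g j'.rev) := by
  by_contra! hlt
  have hf := (lt_apply_sort_rev_iff f j _).1 hlt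
  exact lt_irrefl _ ((lt_apply_sort_rev_iff g j' _).2 (hj ▸ hf.trans_le (h _)))

end Tuple

theorem Multiset.countP_lt_map_mono {α ι : Type*} [Preorder α] [DecidableLT α]
    (s : Multiset ι) {f g : ι → α} (hfg : f ≤ g) (c : α) :
    (s.map f).countP (c < ·) ≤ (s.map g).countP (c < ·) := by
  rw [Multiset.countP_map, Multiset.countP_map]
  exact Multiset.card_le_card (Multiset.monotone_filter_right s fun i hi => hi.trans_le (hfg i))

namespace Matrix

variable {𝕜 ι : Type*} [RCLike 𝕜] [Fintype ι] [DecidableEq ι]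

theorem conjTranspose_cfc_mul_cfc (f : ℝ → ℝ) (A : Matrix ι ι 𝕜) :
    (cfc f A)ᴴ * cfc f A = cfc (fun x => f x ^ 2) A := by
  have hf := A.finite_real_spectrum.continuousOn f
  rw [← star_eq_conjTranspose, (cfc_predicate f A).star_eq, ← cfc_mul ..]
  simp only [sq]

namespace IsHermitian

variable {A B : Matrix ι ι 𝕜}

theorem map_eigenvalues_eq_of_roots_charpoly (hB : B.IsHermitian) {t : Multiset ℝ}
    (h : B.charpoly.roots = t.map (↑)) : univ.val.map hB.eigenvalues = t := by
  refine Multiset.map_injective (f := ((↑) : ℝ → 𝕜)) RCLike.ofReal_injective ?_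
  rw [← h, hB.roots_charpoly_eq_eigenvalues, Multiset.map_map]

theorem map_eigenvalues_eq_of_eq_cfc (hA : A.IsHermitian) (hB : B.IsHermitian) {f : ℝ → ℝ}
    (hBA : B = cfc f A) : univ.val.map hB.eigenvalues = univ.val.map (f ∘ hA.eigenvalues) := by
  subst hBA
  refine hB.map_eigenvalues_eq_of_roots_charpoly ?_
  rw [hA.charpoly_cfc_eq, roots_prod _ _ (prod_ne_zero_iff.2 fun i _ => X_sub_C_ne_zero _)]
  simp [Multiset.map_map]

end IsHermitian

end Matrix

section BlockDiagonal

variable {m : ℕ}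

theorem dsum_conjTranspose_mul_self (X Y : Matrix (Fin m) (Fin m) ℂ) :
    (dsum X Y)ᴴ * dsum X Y = dsum (Xᴴ * X) (Yᴴ * Y) := by
  simp [dsum, conjTranspose_submatrix, fromBlocks_conjTranspose, submatrix_mul_equiv,
    fromBlocks_multiply]

theorem charpoly_dsum (X Y : Matrix (Fin m) (Fin m) ℂ) :
    (dsum X Y).charpoly = X.charpoly * Y.charpoly := by
  rw [dsum, charpoly_reindex, charpoly_fromBlocks_zero₁₂]

theorem map_eigenvalues_eq_of_eq_dsum {B : Matrix (Fin (m + m)) (Fin (m + m)) ℂ}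
    {X Y : Matrix (Fin m) (Fin m) ℂ} (hB : B.IsHermitian) (hX : X.IsHermitian)
    (hY : Y.IsHermitian) (hBXY : B = dsum X Y) :
    univ.val.map hB.eigenvalues = univ.val.map hX.eigenvalues + univ.val.map hY.eigenvalues := by
  subst hBXY
  refine hB.map_eigenvalues_eq_of_roots_charpoly ?_
  rw [charpoly_dsum, roots_mul ((charpoly_monic X).mul (charpoly_monic Y)).ne_zero,
    hX.roots_charpoly_eq_eigenvalues, hY.roots_charpoly_eq_eigenvalues, Multiset.map_add,
    Multiset.map_map, Multiset.map_map]

end BlockDiagonal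

theorem matAbs_eq_cfc_sqrt {m : ℕ} (X : Matrix (Fin m) (Fin m) ℂ) :
    matAbs X = cfc Real.sqrt (Xᴴ * X) :=
  ((posSemidef_conjTranspose_mul_self X).1.cfc_eq _).symm

namespace Matrix.IsHermitian

variable {m : ℕ} {A : Matrix (Fin m) (Fin m) ℂ}

theorem matAbs_eq_cfc_abs (hA : A.IsHermitian) : matAbs A = cfc (|·| : ℝ → ℝ) A := by
  have hsq : Aᴴ * A = cfc (· ^ 2 : ℝ → ℝ) A := by
    rw [hA.eq, cfc_pow_id A 2, sq]
  rw [matAbs_eq_cfc_sqrt, hsq, ← cfc_comp Real.sqrt (· ^ 2 : ℝ → ℝ) A]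
  congr 1
  funext x
  exact Real.sqrt_sq_eq_abs x

theorem matPosPart_eq_cfc (hA : A.IsHermitian) :
    matPosPart A = cfc (fun x : ℝ => 2⁻¹ * (|x| + x)) A := by
  rw [cfc_const_mul .., cfc_add .., cfc_id' ℝ A, ← hA.matAbs_eq_cfc_abs, matPosPart,
    ← Complex.coe_smul]
  norm_num

end Matrix.IsHermitian

/-- Let `A` be a Hermitian `n×n` complex matrix. Then for every index `j`,
`s_j(A⁺) ≤ s_j(|A| ⊕ (|A| - A)/2)`. -/
theorem stmt_9 {n : ℕ} (A : Matrix (Fin n) (Fin n) ℂ) (hA : A.IsHermitian) (j : Fin n) :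
    singularValues (matPosPart A) j ≤
      singularValues (dsum (matAbs A) ((2 : ℂ)⁻¹ • (matAbs A - A))) (Fin.castAdd n j) := by
  set Y : Matrix (Fin n) (Fin n) ℂ := (2 : ℂ)⁻¹ • (matAbs A - A)
  have hPos := hA.map_eigenvalues_eq_of_eq_cfc (isHermitian_conjTranspose_mul_self (matPosPart A))
    (f := fun x => (2⁻¹ * (|x| + x)) ^ 2) (by rw [hA.matPosPart_eq_cfc, conjTranspose_cfc_mul_cfc])
  have hAbs := hA.map_eigenvalues_eq_of_eq_cfc (isHermitian_conjTranspose_mul_self (matAbs A))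
    (f := fun x => |x| ^ 2) (by rw [hA.matAbs_eq_cfc_abs, conjTranspose_cfc_mul_cfc])
  have hDsum := map_eigenvalues_eq_of_eq_dsum (isHermitian_conjTranspose_mul_self (dsum _ Y))
    (isHermitian_conjTranspose_mul_self (matAbs A)) (isHermitian_conjTranspose_mul_self Y)
    (dsum_conjTranspose_mul_self _ _)
  have hPos_le_abs : (fun x : ℝ => (2⁻¹ * (|x| + x)) ^ 2) ≤ fun x => |x| ^ 2 := fun x =>
    pow_le_pow_left₀ (by linarith [neg_abs_le x]) (by linarith [le_abs_self x]) 2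
  refine Real.sqrt_le_sqrt <|
    Tuple.apply_sort_rev_le_of_countP_le _ _ (Fin.val_castAdd n j).symm fun c => ?_
  rw [hPos, hDsum, hAbs, Multiset.countP_add]
  exact (Multiset.countP_lt_map_mono _ (fun i => hPos_le_abs _) c).trans (Nat.le_add_right _ _)
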